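/- Main reversion porism (completion of a non-closing chain): Let P₁,…,P_{n−2} ∈ ℝ³ with ⟨Pᵢ,Pᵢ⟩ ≠ 0 and suppose M := M_{P_{n−2}} ∘ ⋯ ∘ M_{P₁} is not a scalar multiple of the identity. Then there exists a 2-dimensional subspace W ⊆ ℝ³ (a line ℓ) such that: (i) for every Q ∈ W with ⟨Q,Q⟩ ≠ 0 there exists Q' ∈ W with ⟨Q',Q'⟩ ≠ 0 such that M_{Q'} ∘ M_Q ∘ M is a nonzero scalar multiple of the identity, i.e., P₁,…,P_{n−2}, Q, Q' have the closing property with respect to C; (ii) conversely, whenever Q, Q' with ⟨Q,Q⟩ ≠ 0, ⟨Q',Q'⟩ ≠ 0 are such that M_{Q'} ∘ M_Q ∘ M is a nonzero scalar multiple of the identity, then Q ∈ W and Q' ∈ W; and (iii) for a given such Q, the point Q' is unique up to a nonzero scalar. -/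

import Mathlib

/-- Minkowski product on ℝ³. -/
def mink (X Y : Fin 3 → ℝ) : ℝ := X 0 * Y 0 + X 1 * Y 1 - X 2 * Y 2

/-- The reversion map in the point `P` (with `⟨P,P⟩ ≠ 0`), as a linear map on
representing vectors: `M_P X = ⟨P,P⟩X − 2⟨X,P⟩P`. -/
def rev (P X : Fin 3 → ℝ) : Fin 3 → ℝ := mink P P • X - (2 * mink X P) • P

/-- `chain n P X = (M_{P n} ∘ ⋯ ∘ M_{P 1}) X`, the composition of the reversions in
`P 0, …, P (n-1)`, applied in this order. -/
def chain : (n : ℕ) → (Fin n → (Fin 3 → ℝ)) → (Fin 3 → ℝ) → (Fin 3 → ℝ)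
  | 0, _, X => X
  | n + 1, P, X => rev (P (Fin.last n)) (chain n (fun i => P i.castSucc) X)

/-- The points `P 0, …, P (n-1)` have the closing property with respect to the conic
`C` iff `M_{P n} ∘ ⋯ ∘ M_{P 1}` is a nonzero scalar multiple of the identity. -/
def closes (n : ℕ) (P : Fin n → (Fin 3 → ℝ)) : Prop :=
  ∃ c : ℝ, c ≠ 0 ∧ ∀ X, chain n P X = c • X

open Matrix

noncomputable section

def Jm : Matrix (Fin 3) (Fin 3) ℝ := !![1,0,0;0,1,0;0,0,-1]
def Jv (X : Fin 3 → ℝ) : Fin 3 → ℝ := ![X 0, X 1, -X 2]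
def cp (x y : Fin 3 → ℝ) : Fin 3 → ℝ :=
  ![x 1 * y 2 - x 2 * y 1, x 2 * y 0 - x 0 * y 2, x 0 * y 1 - x 1 * y 0]
def dot3 (x y : Fin 3 → ℝ) : ℝ := x 0 * y 0 + x 1 * y 1 + x 2 * y 2

def Rm (P : Fin 3 → ℝ) : Matrix (Fin 3) (Fin 3) ℝ :=
  mink P P • (1 : Matrix (Fin 3) (Fin 3) ℝ) - (2:ℝ) • Matrix.vecMulVec P (Jv P)

lemma mink_symm (X Y : Fin 3 → ℝ) : mink X Y = mink Y X := by simp [mink]; ring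

lemma mink_dot (X Y : Fin 3 → ℝ) : mink X Y = dot3 X (Jv Y) := by
  simp [mink, dot3, Jv]; ring

lemma Rm_mulVec (P X : Fin 3 → ℝ) : (Rm P).mulVec X = rev P X := by
  funext i
  fin_cases i <;>
    simp [Rm, rev, mink, Jv, Matrix.mulVec, Matrix.vecMulVec, dotProduct,
      Fin.sum_univ_three, Matrix.one_apply] <;> ring

lemma Rm_orth (P : Fin 3 → ℝ) : (Rm P)ᵀ * Jm * (Rm P) = (mink P P)^2 • Jm := by
  ext i j
  fin_cases i <;> fin_cases j <;>
    simp [Rm, Jm, mink, Jv, Matrix.mul_apply, Matrix.vecMulVec, Fin.sum_univ_three,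
      Matrix.one_apply, Matrix.transpose_apply, Matrix.vecHead, Matrix.vecTail] <;> ring

lemma Rm_det (P : Fin 3 → ℝ) : (Rm P).det = -(mink P P)^3 := by
  simp [Rm, Matrix.det_fin_three, mink, Jv, Matrix.vecMulVec, Matrix.one_apply]
  ring

lemma Rm_sq (P : Fin 3 → ℝ) : (Rm P) * (Rm P) = (mink P P)^2 • (1 : Matrix (Fin 3) (Fin 3) ℝ) := by
  ext i j
  fin_cases i <;> fin_cases j <;>
    simp [Rm, mink, Jv, Matrix.mul_apply, Matrix.vecMulVec, Fin.sum_univ_three,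
      Matrix.one_apply] <;> ring

lemma Rm_trace (P : Fin 3 → ℝ) : (Rm P).trace = mink P P := by
  simp [Rm, Matrix.trace_fin_three, mink, Jv, Matrix.vecMulVec, Matrix.one_apply]
  ring

lemma Rm_smul (e : ℝ) (P : Fin 3 → ℝ) : Rm (e • P) = e^2 • Rm P := by
  ext i j
  fin_cases i <;> fin_cases j <;>
    simp [Rm, mink, Jv, Matrix.vecMulVec, Matrix.one_apply] <;> ring

def Cm : (n : ℕ) → (Fin n → (Fin 3 → ℝ)) → Matrix (Fin 3) (Fin 3) ℝ
  | 0, _ => 1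
  | n + 1, P => Rm (P (Fin.last n)) * Cm n (fun i => P i.castSucc)

lemma Cm_mulVec : ∀ (n : ℕ) (P : Fin n → (Fin 3 → ℝ)) (X : Fin 3 → ℝ),
    (Cm n P).mulVec X = chain n P X
  | 0, P, X => by simp [Cm, chain]
  | n + 1, P, X => by
    rw [Cm, chain, ← Cm_mulVec n _ X, ← Matrix.mulVec_mulVec, Rm_mulVec]

lemma Cm_orth : ∀ (n : ℕ) (P : Fin n → (Fin 3 → ℝ)),
    (Cm n P)ᵀ * Jm * (Cm n P) = (∏ i, mink (P i) (P i))^2 • Jm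
  | 0, P => by simp [Cm]
  | n + 1, P => by
    rw [Cm, Matrix.transpose_mul]
    have h1 : (Cm n fun i => P i.castSucc)ᵀ * (Rm (P (Fin.last n)))ᵀ * Jm *
        (Rm (P (Fin.last n)) * Cm n fun i => P i.castSucc)
        = (Cm n fun i => P i.castSucc)ᵀ * ((Rm (P (Fin.last n)))ᵀ * Jm * Rm (P (Fin.last n))) *
          (Cm n fun i => P i.castSucc) := by simp only [Matrix.mul_assoc]
    rw [h1, Rm_orth, Matrix.mul_smul, Matrix.smul_mul, Cm_orth n, Fin.prod_univ_castSucc,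
      smul_smul, mul_pow]
    ring_nf

lemma Cm_det : ∀ (n : ℕ) (P : Fin n → (Fin 3 → ℝ)),
    (Cm n P).det = (-1)^n * (∏ i, mink (P i) (P i))^3
  | 0, P => by simp [Cm]
  | n + 1, P => by
    rw [Cm, Matrix.det_mul, Rm_det, Cm_det n, Fin.prod_univ_castSucc]
    ring

lemma chain_snoc1 (m : ℕ) (P : Fin m → (Fin 3 → ℝ)) (Q X : Fin 3 → ℝ) :
    chain (m + 1) (Fin.snoc P Q) X = rev Q (chain m P X) := by
  have h : (fun i : Fin m => (Fin.snoc P Q : Fin (m+1) → (Fin 3 → ℝ)) i.castSucc) = P := by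
    funext i; simp
  rw [chain, Fin.snoc_last, h]

lemma chain_snoc (m : ℕ) (P : Fin m → (Fin 3 → ℝ)) (Q Q' X : Fin 3 → ℝ) :
    chain (m + 2) (Fin.snoc (Fin.snoc P Q) Q') X = rev Q' (rev Q (chain m P X)) := by
  exact (chain_snoc1 (m+1) (Fin.snoc P Q) Q' X).trans (by rw [chain_snoc1])

lemma mulVec_ext {A B : Matrix (Fin 3) (Fin 3) ℝ} (h : ∀ v, A.mulVec v = B.mulVec v) :
    A = B := by
  ext i j
  have := congrFun (h (Pi.single j 1)) i
  simpa [Matrix.mulVec_single] using this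

lemma Jm_det : Jm.det = -1 := by
  simp [Jm, Matrix.det_fin_three]

lemma mink_nondeg {u : Fin 3 → ℝ} (h : ∀ z, mink z u = 0) : u = 0 := by
  have h1 := h (Jv u)
  simp [mink, Jv] at h1
  funext i; fin_cases i <;> simp <;> nlinarith [h1]

lemma mink_mulVec (A : Matrix (Fin 3) (Fin 3) ℝ) (x y : Fin 3 → ℝ) :
    mink (A.mulVec x) (A.mulVec y) = dot3 x ((Aᵀ * Jm * A).mulVec y) := by
  simp [mink, dot3, Jm, Matrix.mulVec, Matrix.mul_apply, dotProduct, Fin.sum_univ_three,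
    Matrix.vecHead, Matrix.vecTail]
  ring

lemma dot3_Jm_mulVec (x y : Fin 3 → ℝ) : dot3 x (Jm.mulVec y) = mink x y := by
  simp [mink, dot3, Jm, Matrix.mulVec, dotProduct, Fin.sum_univ_three,
    Matrix.vecHead, Matrix.vecTail]
  ring

lemma mink_of_orth {A : Matrix (Fin 3) (Fin 3) ℝ} {c : ℝ} (h : Aᵀ * Jm * A = c • Jm)
    (x y : Fin 3 → ℝ) : mink (A.mulVec x) (A.mulVec y) = c * mink x y := by
  rw [mink_mulVec, h, Matrix.smul_mulVec, ← dot3_Jm_mulVec]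
  simp [dot3]
  ring

lemma cp_zero_dep {w u : Fin 3 → ℝ} (h : cp w u = 0) (hu : u ≠ 0) : ∃ c : ℝ, w = c • u := by
  have h0 := congrFun h 0
  have h1 := congrFun h 1
  have h2 := congrFun h 2
  simp [cp] at h0 h1 h2
  have hk : u 0 ≠ 0 ∨ u 1 ≠ 0 ∨ u 2 ≠ 0 := by
    by_contra hc
    push_neg at hc
    exact hu (by funext i; fin_cases i <;> simp [hc.1, hc.2.1, hc.2.2])
  rcases hk with hk | hk | hk
  · exact ⟨w 0 / u 0, by funext i; fin_cases i <;> simp <;> field_simp <;> nlinarith [h0, h1, h2]⟩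
  · exact ⟨w 1 / u 1, by funext i; fin_cases i <;> simp <;> field_simp <;> nlinarith [h0, h1, h2]⟩
  · exact ⟨w 2 / u 2, by funext i; fin_cases i <;> simp <;> field_simp <;> nlinarith [h0, h1, h2]⟩

lemma cp_cp (w x y : Fin 3 → ℝ) : cp w (cp x y) = dot3 w y • x - dot3 w x • y := by
  funext i; fin_cases i <;> simp [cp, dot3] <;> ring

lemma dot3_cp_left (x y : Fin 3 → ℝ) : dot3 x (cp x y) = 0 := by simp [cp, dot3]; ring

lemma dot3_cp_right (x y : Fin 3 → ℝ) : dot3 y (cp x y) = 0 := by simp [cp, dot3]; ring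

lemma indep_cp_ne {x y : Fin 3 → ℝ}
    (h : ∀ c d : ℝ, c • x + d • y = 0 → c = 0 ∧ d = 0) : cp x y ≠ 0 := by
  intro h0
  have hx : x ≠ 0 := by
    intro hx
    have := (h 1 0 (by simp [hx])).1
    norm_num at this
  have hyx : cp y x = 0 := by
    funext i
    have := congrFun h0 i
    fin_cases i <;> simp [cp] at this ⊢ <;> linarith
  obtain ⟨c, hc⟩ := cp_zero_dep hyx hx
  have := (h c (-1) (by rw [hc]; funext i; simp)).2
  norm_num at this

lemma perp_two_span {w x y : Fin 3 → ℝ} (hcp : cp x y ≠ 0)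
    (h1 : dot3 w x = 0) (h2 : dot3 w y = 0) : ∃ c : ℝ, w = c • cp x y := by
  apply cp_zero_dep _ hcp
  rw [cp_cp, h1, h2]
  simp

lemma det_eps (G : Matrix (Fin 3) (Fin 3) ℝ) (ε : ℝ) (hε : ε ^ 2 = 1)
    (hGJ : Gᵀ * Jm * G = Jm) (hdet : G.det = ε) : (G - ε • 1).det = 0 := by
  have key : Gᵀ * Jm * (G - ε • 1) = ((-ε) • (G - ε • 1))ᵀ * Jm := by
    rw [Matrix.mul_sub, hGJ, Matrix.transpose_smul, Matrix.transpose_sub, Matrix.transpose_smul,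
      Matrix.transpose_one]
    rw [Matrix.mul_smul, Matrix.mul_one, Matrix.smul_mul, Matrix.sub_mul, Matrix.smul_mul,
      Matrix.one_mul]
    rw [smul_sub, smul_smul]
    have h2 : -ε * ε = -1 := by nlinarith
    rw [h2]
    module
  have hd := congrArg Matrix.det key
  rw [Matrix.det_mul, Matrix.det_mul, Matrix.det_mul, Matrix.det_transpose, Matrix.det_transpose,
    Matrix.det_smul, hdet, Jm_det] at hd
  have hne : ε ≠ 0 := by intro h; rw [h] at hε; norm_num at hε
  simp only [Fintype.card_fin] at hd
  have h3 : (-ε) ^ 3 = -ε := by rw [show (-ε)^3 = -(ε * ε^2) by ring, hε]; ring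
  rw [h3] at hd
  have h4 : ε * (G - ε • 1).det = 0 := by linear_combination (-1/2 : ℝ) * hd
  exact (mul_eq_zero.mp h4).resolve_left hne

lemma exists_eigen (G : Matrix (Fin 3) (Fin 3) ℝ) (ε : ℝ)
    (hdet : (G - ε • 1).det = 0) : ∃ a, a ≠ 0 ∧ G.mulVec a = ε • a := by
  obtain ⟨a, ha, h⟩ := (Matrix.exists_mulVec_eq_zero_iff).mpr hdet
  refine ⟨a, ha, ?_⟩
  rw [Matrix.sub_mulVec, Matrix.smul_mulVec, Matrix.one_mulVec, sub_eq_zero] at h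
  exact h


lemma mink_sub_left (a b c : Fin 3 → ℝ) : mink (a - b) c = mink a c - mink b c := by
  simp [mink]; ring

lemma mink_add_left (a b c : Fin 3 → ℝ) : mink (a + b) c = mink a c + mink b c := by
  simp [mink]; ring

lemma mink_smul_left (f : ℝ) (a c : Fin 3 → ℝ) : mink (f • a) c = f * mink a c := by
  simp [mink]; ring

lemma mink_smul_right (f : ℝ) (a c : Fin 3 → ℝ) : mink a (f • c) = f * mink a c := by
  simp [mink]; ring

lemma mink_add_right (a b c : Fin 3 → ℝ) : mink c (a + b) = mink c a + mink c b := by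
  simp [mink]; ring


lemma Jv_add_smul (c d : ℝ) (x y : Fin 3 → ℝ) : c • Jv x + d • Jv y = Jv (c • x + d • y) := by
  funext i; fin_cases i <;> simp [Jv] <;> ring

lemma Jv_eq_zero {x : Fin 3 → ℝ} (h : Jv x = 0) : x = 0 := by
  funext i
  have h0 := congrFun h 0; have h1 := congrFun h 1; have h2 := congrFun h 2
  simp [Jv] at h0 h1 h2
  fin_cases i <;> simp [h0, h1, h2] <;> linarith

lemma fix (G : Matrix (Fin 3) (Fin 3) ℝ) (hGJ : Gᵀ * Jm * G = Jm) (hdet : G.det = 1)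
    (x y : Fin 3 → ℝ) (hx : G.mulVec x = x) (hy : G.mulVec y = y)
    (hindep : ∀ c d : ℝ, c • x + d • y = 0 → c = 0 ∧ d = 0) :
    ∀ z, G.mulVec z = z := by
  have horth : ∀ z w, mink (G.mulVec z) (G.mulVec w) = mink z w := by
    intro z w
    have := mink_of_orth (c := 1) (by rw [hGJ, one_smul]) z w
    simpa using this
  set u := cp (Jv x) (Jv y) with hu_def
  have hu : u ≠ 0 := by
    apply indep_cp_ne
    intro c d h
    exact hindep c d (Jv_eq_zero (by rw [← Jv_add_smul]; exact h))
  have hspan : ∀ z, ∃ f : ℝ, G.mulVec z - z = f • u := by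
    intro z
    apply perp_two_span hu
    · rw [← mink_dot, mink_sub_left]
      have h1 : mink (G.mulVec z) x = mink z x := by
        nth_rewrite 1 [← hx]
        exact horth z x
      rw [h1]; ring
    · rw [← mink_dot, mink_sub_left]
      have h1 : mink (G.mulVec z) y = mink z y := by
        nth_rewrite 1 [← hy]
        exact horth z y
      rw [h1]; ring
  have quad : ∀ (z : Fin 3 → ℝ) (f : ℝ), G.mulVec z - z = f • u →
      2 * f * mink z u + f ^ 2 * mink u u = 0 := by
    intro z f h
    have hz : G.mulVec z = z + f • u := by rw [← h]; abel
    have := horth z z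
    rw [hz, mink_add_left, mink_add_right, mink_add_right, mink_smul_left, mink_smul_right,
      mink_smul_left, mink_smul_right, mink_symm u z] at this
    nlinarith [this]
  obtain ⟨fu, hfu⟩ := hspan u
  by_cases hq : mink u u = 0
  · -- degenerate case
    intro z
    by_contra hz0
    obtain ⟨f0, hf0⟩ := hspan z
    have hf0ne : f0 ≠ 0 := by
      intro h
      rw [h, zero_smul, sub_eq_zero] at hf0
      exact hz0 hf0
    have hmz : mink z u = 0 := by
      have := quad z f0 hf0
      rw [hq] at this
      have h2 : 2 * f0 * mink z u = 0 := by linarith [this]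
      rcases mul_eq_zero.mp h2 with h | h
      · rcases mul_eq_zero.mp h with h | h
        · norm_num at h
        · exact absurd h hf0ne
      · exact h
    -- show all z' have mink z' u = 0
    have hall : ∀ z', mink z' u = 0 := by
      intro z'
      obtain ⟨f1, hf1⟩ := hspan z'
      have hsum : G.mulVec (z' + z) - (z' + z) = (f1 + f0) • u := by
        rw [Matrix.mulVec_add, add_smul, ← hf1, ← hf0]; abel
      have q1 := quad z' f1 hf1
      have q2 := quad (z' + z) (f1 + f0) hsum
      rw [hq] at q1 q2
      rw [mink_add_left, hmz] at q2
      by_cases hmz' : mink z' u = 0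
      · exact hmz'
      · exfalso
        have hf1z : f1 = 0 := by
          have : 2 * f1 * mink z' u = 0 := by linarith
          rcases mul_eq_zero.mp this with h | h
          · rcases mul_eq_zero.mp h with h | h
            · norm_num at h
            · exact h
          · exact absurd h hmz'
        have : 2 * (f1 + f0) * mink z' u = 0 := by linarith
        rcases mul_eq_zero.mp this with h | h
        · rcases mul_eq_zero.mp h with h | h
          · norm_num at h
          · rw [hf1z, zero_add] at h; exact hf0ne h
        · exact absurd h hmz'
    exact hu (mink_nondeg hall)
  · -- nondegenerate case: fu = 0 or fu = -2
    have hGu : G.mulVec u = u + fu • u := by rw [← hfu]; abel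
    have hfucase : fu = 0 ∨ fu = -2 := by
      have := quad u fu hfu
      have h2 : fu * (2 + fu) * mink u u = 0 := by nlinarith [this]
      rcases mul_eq_zero.mp h2 with h | h
      · rcases mul_eq_zero.mp h with h | h
        · left; exact h
        · right; linarith
      · exact absurd h hq
    rcases hfucase with hcase | hcase
    · -- Gu = u, show G = 1
      rw [hcase, zero_smul, add_zero] at hGu
      intro z
      obtain ⟨fz, hfz⟩ := hspan z
      have hGz : G.mulVec z = z + fz • u := by rw [← hfz]; abel
      have hpol := horth z u
      rw [hGz, hGu, mink_add_left, mink_smul_left] at hpol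
      have : fz * mink u u = 0 := by linarith
      have hfz0 : fz = 0 := by
        rcases mul_eq_zero.mp this with h | h
        · exact h
        · exact absurd h hq
      rw [hfz0, zero_smul, add_zero] at hGz
      exact hGz
    · -- Gu = -u : G is the reflection in u, det = -1, contradiction
      exfalso
      rw [hcase] at hGu
      have hGu' : G.mulVec u = -u := by rw [hGu]; module
      have hrefl : ∀ z, G.mulVec z = (mink u u)⁻¹ • rev u z := by
        intro z
        obtain ⟨fz, hfz⟩ := hspan z
        have hGz : G.mulVec z = z + fz • u := by rw [← hfz]; abel
        have hpol := horth z u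
        rw [hGz, hGu', mink_add_left, mink_smul_left] at hpol
        -- mink (z + fz u) (-u) : mink a (-u) = - mink a u
        have hneg : mink z (-u) + fz * mink u (-u) = mink z u := hpol
        have hneg2 : mink z (-u) = - mink z u := by simp [mink]; ring
        have hneg3 : mink u (-u) = - mink u u := by simp [mink]; ring
        rw [hneg2, hneg3] at hneg
        have hfz_eq : fz = -2 * mink z u / mink u u := by
          field_simp
          linarith
        rw [hGz, hfz_eq, rev]
        funext i
        simp [mink_symm u z, Pi.smul_apply, Pi.add_apply, Pi.sub_apply, smul_eq_mul]
        field_simp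
        ring
      have : G = (mink u u)⁻¹ • Rm u := by
        apply mulVec_ext
        intro v
        rw [Matrix.smul_mulVec, Rm_mulVec, hrefl]
      rw [this, Matrix.det_smul, Rm_det, Fintype.card_fin] at hdet
      have : ((mink u u)⁻¹) ^ 3 * (mink u u) ^ 3 = 1 := by
        field_simp
      nlinarith [hdet, this]

lemma mink_neg_right (a c : Fin 3 → ℝ) : mink a (-c) = - mink a c := by simp [mink]; ring

lemma mink_neg_left (a c : Fin 3 → ℝ) : mink (-a) c = - mink a c := by simp [mink]; ring

lemma mink_pos_self (v : Fin 3 → ℝ) (hv : v ≠ 0) : mink (Jv v) v ≠ 0 := by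
  rw [mink_dot]
  have : dot3 (Jv v) (Jv v) = v 0 ^2 + v 1 ^2 + v 2 ^2 := by simp [dot3, Jv]; ring
  rw [this]
  intro h
  apply hv
  funext i; fin_cases i <;> simp <;> nlinarith [h, sq_nonneg (v 0), sq_nonneg (v 1), sq_nonneg (v 2)]

theorem key (H : Matrix (Fin 3) (Fin 3) ℝ) (hHJ : Hᵀ * Jm * H = Jm) (hdet : H.det = -1)
    (a : Fin 3 → ℝ) (ha : a ≠ 0) (hfix : H.mulVec a = a) :
    ∃ v : Fin 3 → ℝ, mink v v ≠ 0 ∧ mink v a = 0 ∧ H = (mink v v)⁻¹ • Rm v := by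
  have horth : ∀ z w, mink (H.mulVec z) (H.mulVec w) = mink z w := by
    intro z w
    have := mink_of_orth (c := 1) (by rw [hHJ, one_smul]) z w
    simpa using this
  obtain ⟨v, hv0, hv⟩ := exists_eigen H (-1) (det_eps H (-1) (by norm_num) hHJ hdet)
  have hvneg : H.mulVec v = -v := by rw [hv]; module
  have hva : mink v a = 0 := by
    have h1 := horth v a
    rw [hvneg, hfix, mink_neg_left] at h1
    linarith [h1]
  by_cases hq : mink v v = 0
  · -- isotropic case: derive a contradiction
    exfalso
    -- a, v independent
    have hindep : ∀ c d : ℝ, c • a + d • v = 0 → c = 0 ∧ d = 0 := by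
      intro c d h
      have h2 : H.mulVec (c • a + d • v) = c • a - d • v := by
        rw [Matrix.mulVec_add, Matrix.mulVec_smul, Matrix.mulVec_smul, hfix, hvneg]
        module
      rw [h, Matrix.mulVec_zero] at h2
      have hsum : (2*c) • a = (c • a + d • v) + (c • a - d • v) := by module
      rw [← h2, h, add_zero] at hsum
      have hc : c = 0 := by
        rcases smul_eq_zero.mp hsum with h' | h'
        · linarith
        · exact absurd h' ha
      refine ⟨hc, ?_⟩
      rw [hc] at h
      simp at h
      rcases h with h' | h'
      · exact h'
      · exact absurd h' hv0
    obtain ⟨u, hu, hspan⟩ : ∃ u : Fin 3 → ℝ, u ≠ 0 ∧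
        ∀ z, mink z a = 0 → mink z v = 0 → ∃ c : ℝ, z = c • u := by
      refine ⟨cp (Jv a) (Jv v), indep_cp_ne ?_, ?_⟩
      · intro c d h
        exact hindep c d (Jv_eq_zero (by rw [← Jv_add_smul]; exact h))
      · intro z h1 h2
        exact perp_two_span (w := z) (indep_cp_ne (fun c d h =>
          hindep c d (Jv_eq_zero (by rw [← Jv_add_smul]; exact h))))
          (by rw [← mink_dot]; exact h1) (by rw [← mink_dot]; exact h2)
    -- v lies in span u
    obtain ⟨c₁, hc₁⟩ := hspan v hva hq
    have hc₁0 : c₁ ≠ 0 := by intro h; rw [h, zero_smul] at hc₁; exact hv0 hc₁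
    -- a is anisotropic
    have haa : mink a a ≠ 0 := by
      intro haa0
      obtain ⟨c₂, hc₂⟩ := hspan a haa0 (by rw [mink_symm]; exact hva)
      have hcon : (1:ℝ) • a + (-(c₂/c₁)) • v = 0 := by
        rw [hc₂, hc₁, one_smul, smul_smul]
        have he : -(c₂/c₁) * c₁ = -c₂ := by field_simp
        rw [he]
        module
      have := (hindep _ _ hcon).1
      norm_num at this
    -- the auxiliary vector w
    set w : Fin 3 → ℝ := mink a a • Jv v - mink (Jv v) a • a with hw_def
    have hwa : mink w a = 0 := by
      rw [hw_def, mink_sub_left, mink_smul_left, mink_smul_left]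
      ring
    have hwv : mink w v = mink a a * mink (Jv v) v := by
      rw [hw_def, mink_sub_left, mink_smul_left, mink_smul_left, mink_symm a v, hva]
      ring
    have hwvne : mink w v ≠ 0 := by
      rw [hwv]
      exact mul_ne_zero haa (mink_pos_self v hv0)
    have hvw : mink v w ≠ 0 := by rw [mink_symm]; exact hwvne
    -- decomposition of vectors orthogonal to a
    have hdecomp : ∀ z, mink z a = 0 → ∃ α β : ℝ, z = α • v + β • w := by
      intro z hza
      set β := mink z v / mink w v with hβ
      set α := (mink z w - β * mink w w) / mink v w with hα
      refine ⟨α, β, ?_⟩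
      set z' := z - α • v - β • w with hz'
      have hz'a : mink z' a = 0 := by
        rw [hz', mink_sub_left, mink_sub_left, mink_smul_left, mink_smul_left,
          hva, hwa, hza]
        ring
      have hz'v : mink z' v = 0 := by
        rw [hz', mink_sub_left, mink_sub_left, mink_smul_left, mink_smul_left, hq, hβ]
        field_simp
        ring
      obtain ⟨c₃, hc₃⟩ := hspan z' hz'a hz'v
      have hz'w : mink z' w = 0 := by
        rw [hz', mink_sub_left, mink_sub_left, mink_smul_left, mink_smul_left, hα]
        field_simp
        ring
      have hcc : (c₃ / c₁) * mink v w = 0 := by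
        rw [← mink_smul_left]
        have : (c₃ / c₁) • v = z' := by
          rw [hc₁, hc₃, smul_smul]
          congr 1
          field_simp
        rw [this]
        exact hz'w
      have hc₃0 : c₃ / c₁ = 0 := by
        rcases mul_eq_zero.mp hcc with h' | h'
        · exact h'
        · exact absurd h' hvw
      have hz'0 : z' = 0 := by
        rw [hc₃, show c₃ = 0 by
          have := hc₃0
          field_simp at this
          simpa using this]
        simp
      have h2 : z - α • v - β • w = 0 := by rw [← hz']; exact hz'0
      linear_combination (norm := module) h2
    -- apply to H w
    have hHwa : mink (H.mulVec w) a = 0 := by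
      have h1 := horth w a
      rw [hfix] at h1
      exact h1.trans hwa
    obtain ⟨s, t, hst⟩ := hdecomp (H.mulVec w) hHwa
    -- constraints from orthogonality
    have ht : t = -1 := by
      have h1 := horth w v
      rw [hst, hvneg, mink_neg_right, mink_add_left, mink_smul_left, mink_smul_left,
        hq] at h1
      have h2 : (-t) * mink w v = 1 * mink w v := by linear_combination h1
      have := mul_right_cancel₀ hwvne h2
      linarith
    have hs : s = 0 := by
      have h1 := horth w w
      rw [hst, ht] at h1
      simp only [mink_add_left, mink_add_right, mink_smul_left, mink_smul_right, hq] at h1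
      rw [mink_symm v w] at h1
      have h2 : s * mink w v = 0 := by linear_combination (-1/2 : ℝ) * h1
      rcases mul_eq_zero.mp h2 with h' | h'
      · exact h'
      · exact absurd h' hwvne
    have hHw : H.mulVec w = -w := by
      rw [hst, hs, ht]
      module
    -- now -H is orthogonal, det 1, fixes v and w which are independent → -H = 1
    have hnHJ : (-H)ᵀ * Jm * (-H) = Jm := by
      simp only [Matrix.transpose_neg, Matrix.neg_mul, Matrix.mul_neg, neg_neg]
      exact hHJ
    have hnHdet : (-H).det = 1 := by
      rw [Matrix.det_neg, hdet, Fintype.card_fin]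
      norm_num
    have hnHv : (-H).mulVec v = v := by rw [Matrix.neg_mulVec, hvneg]; module
    have hnHw : (-H).mulVec w = w := by rw [Matrix.neg_mulVec, hHw]; module
    have hvwindep : ∀ c d : ℝ, c • v + d • w = 0 → c = 0 ∧ d = 0 := by
      intro c d h
      have h1 : mink (c • v + d • w) v = 0 := by rw [h]; simp [mink]
      rw [mink_add_left, mink_smul_left, mink_smul_left, hq] at h1
      have hd : d = 0 := by
        rcases mul_eq_zero.mp (show d * mink w v = 0 by linarith) with h' | h'
        · exact h'
        · exact absurd h' hwvne
      refine ⟨?_, hd⟩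
      rw [hd] at h
      simp at h
      rcases h with h' | h'
      · exact h'
      · exact absurd h' hv0
    have hall := fix (-H) hnHJ hnHdet v w hnHv hnHw hvwindep
    have h2 := hall a
    rw [Matrix.neg_mulVec, hfix] at h2
    have h3 : (2:ℝ) • a = 0 := by linear_combination (norm := module) -h2
    rcases smul_eq_zero.mp h3 with h' | h'
    · norm_num at h'
    · exact ha h'
  · -- anisotropic case: H is the reflection in v
    refine ⟨v, hq, hva, ?_⟩
    set q := mink v v with hqdef
    set G' := q⁻¹ • (Rm v * H) with hG'
    have hRH : (Rm v * H)ᵀ * Jm * (Rm v * H) = (q^2) • Jm := by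
      rw [Matrix.transpose_mul]
      have h1 : Hᵀ * (Rm v)ᵀ * Jm * (Rm v * H) = Hᵀ * ((Rm v)ᵀ * Jm * Rm v) * H := by
        simp only [Matrix.mul_assoc]
      rw [h1, Rm_orth, Matrix.mul_smul, Matrix.smul_mul]
      rw [show Hᵀ * Jm * H = Jm from hHJ]
    have hG'J : G'ᵀ * Jm * G' = Jm := by
      have he : G'ᵀ * Jm * G' = (q⁻¹ * q⁻¹) • ((Rm v * H)ᵀ * Jm * (Rm v * H)) := by
        rw [hG', Matrix.transpose_smul, Matrix.smul_mul, Matrix.mul_smul, Matrix.smul_mul,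
          smul_smul]
      rw [he, hRH, smul_smul]
      have he2 : q⁻¹ * q⁻¹ * q^2 = 1 := by field_simp
      rw [he2, one_smul]
    have hG'det : G'.det = 1 := by
      rw [hG', Matrix.det_smul, Matrix.det_mul, Rm_det, hdet, Fintype.card_fin]
      field_simp
      rw [hqdef]
    have hG'a : G'.mulVec a = a := by
      rw [hG', Matrix.smul_mulVec, ← Matrix.mulVec_mulVec, hfix, Rm_mulVec, rev]
      rw [mink_symm a v, hva]
      have he : mink v v • a - (2*(0:ℝ)) • v = q • a := by rw [hqdef]; module
      rw [he, smul_smul, inv_mul_cancel₀ hq, one_smul]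
    have hG'v : G'.mulVec v = v := by
      rw [hG', Matrix.smul_mulVec, ← Matrix.mulVec_mulVec, hvneg, Rm_mulVec, rev]
      rw [mink_neg_left]
      have he : mink v v • (-v) - (2 * -mink v v) • v = q • v := by rw [hqdef]; module
      rw [he, smul_smul, inv_mul_cancel₀ hq, one_smul]
    have hindep : ∀ c d : ℝ, c • a + d • v = 0 → c = 0 ∧ d = 0 := by
      intro c d h
      have h1 : mink (c • a + d • v) v = 0 := by rw [h]; simp [mink]
      rw [mink_add_left, mink_smul_left, mink_smul_left, mink_symm a v, hva] at h1
      have hd : d = 0 := by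
        rcases mul_eq_zero.mp (show d * mink v v = 0 by linarith) with h' | h'
        · exact h'
        · exact absurd h' hq
      refine ⟨?_, hd⟩
      rw [hd] at h
      simp at h
      rcases h with h' | h'
      · exact h'
      · exact absurd h' ha
    have hall := fix G' hG'J hG'det a v hG'a hG'v hindep
    have hRmH : Rm v * H = q • 1 := by
      apply mulVec_ext
      intro z
      have h1 := hall z
      rw [hG', Matrix.smul_mulVec] at h1
      have h2 : (Rm v * H).mulVec z = q • z := by
        have h3 := congrArg (fun t => q • t) h1
        simp only [smul_smul, mul_inv_cancel₀ hq, one_smul] at h3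
        exact h3
      rw [h2, Matrix.smul_mulVec, Matrix.one_mulVec]
    have h1 : Rm v * (Rm v * H) = Rm v * (q • 1) := by rw [hRmH]
    rw [← Matrix.mul_assoc, Rm_sq] at h1
    rw [Matrix.smul_mul, Matrix.one_mul, Matrix.mul_smul, Matrix.mul_one] at h1
    have h2 := congrArg (fun t => (q^2)⁻¹ • t) h1
    simp only [smul_smul] at h2
    rw [inv_mul_cancel₀ (pow_ne_zero 2 hq), one_smul] at h2
    rw [h2]
    congr 1
    rw [pow_two]
    field_simp


lemma dot3_comm (x y : Fin 3 → ℝ) : dot3 x y = dot3 y x := by simp [dot3]; ring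

lemma mink_ne_zero_of {Q : Fin 3 → ℝ} (h : mink Q Q ≠ 0) : Q ≠ 0 := by
  intro h0; rw [h0] at h; simp [mink] at h

lemma smul_cancel {V : Type*} [AddCommGroup V] [Module ℝ V] {c : ℝ} (hc : c ≠ 0)
    {A B : V} (h : c • A = c • B) : A = B := by
  have := congrArg (fun t => c⁻¹ • t) h
  simpa [smul_smul, inv_mul_cancel₀ hc] using this

lemma smul_move {V : Type*} [AddCommGroup V] [Module ℝ V] {c : ℝ} (hc : c ≠ 0)
    {A B : V} (h : c • A = B) : A = c⁻¹ • B := by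
  rw [← h, smul_smul, inv_mul_cancel₀ hc, one_smul]

lemma rev_perp {P X : Fin 3 → ℝ} (h : mink X P = 0) : rev P X = mink P P • X := by
  rw [rev, h]
  module

lemma cube_eq_one {x : ℝ} (h : x^3 = 1) : x = 1 := by nlinarith [sq_nonneg x, sq_nonneg (x-1), sq_nonneg (x+1)]


/-- **Main reversion porism (completion of a non-closing chain).** If
`M = M_{P (m-1)} ∘ ⋯ ∘ M_{P 0}` is not a scalar multiple of the identity, then there is
a line (2-dimensional subspace) `W` such that: (i) every point `Q ∈ W` off `C` can be
completed by a point `Q' ∈ W` off `C` so that `P 0, …, P (m-1), Q, Q'` close up;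
(ii) only points of `W` can occur in such completions; and (iii) `Q'` is unique up to a
nonzero scalar. -/
theorem main_reversion_porism
    (m : ℕ) (P : Fin m → (Fin 3 → ℝ)) (hP : ∀ i, mink (P i) (P i) ≠ 0)
    (hnot : ¬ ∃ c : ℝ, ∀ X, chain m P X = c • X) :
    ∃ W : Submodule ℝ (Fin 3 → ℝ), Module.finrank ℝ W = 2 ∧
      (∀ Q ∈ W, mink Q Q ≠ 0 → ∃ Q' ∈ W, mink Q' Q' ≠ 0 ∧
        closes (m + 2) (Fin.snoc (Fin.snoc P Q) Q')) ∧
      (∀ Q Q' : Fin 3 → ℝ, mink Q Q ≠ 0 → mink Q' Q' ≠ 0 →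
        closes (m + 2) (Fin.snoc (Fin.snoc P Q) Q') → Q ∈ W ∧ Q' ∈ W) ∧
      (∀ Q Q₁ Q₂ : Fin 3 → ℝ, mink Q Q ≠ 0 → mink Q₁ Q₁ ≠ 0 → mink Q₂ Q₂ ≠ 0 →
        closes (m + 2) (Fin.snoc (Fin.snoc P Q) Q₁) →
        closes (m + 2) (Fin.snoc (Fin.snoc P Q) Q₂) →
        ∃ c : ℝ, c ≠ 0 ∧ Q₂ = c • Q₁) := by
  classical
  set lam : ℝ := ∏ i, mink (P i) (P i) with hlam_def
  have hlam : lam ≠ 0 := Finset.prod_ne_zero_iff.mpr (fun i _ => hP i)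
  set σ : ℝ := (-1)^m with hσ_def
  have hσ2 : σ^2 = 1 := by rw [hσ_def, ← pow_mul, mul_comm, pow_mul]; norm_num
  have hσ0 : σ ≠ 0 := by intro h; rw [h] at hσ2; norm_num at hσ2
  obtain ⟨M, hM_def⟩ : ∃ M' : Matrix (Fin 3) (Fin 3) ℝ, M' = Cm m P := ⟨_, rfl⟩
  have hMorth : Mᵀ * Jm * M = lam^2 • Jm := by rw [hM_def]; exact Cm_orth m P
  have hMdet : M.det = σ * lam^3 := by rw [hM_def]; exact Cm_det m P
  obtain ⟨G, hG_def⟩ : ∃ G' : Matrix (Fin 3) (Fin 3) ℝ, G' = (σ * lam⁻¹) • M := ⟨_, rfl⟩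
  have hMG : M = (σ * lam) • G := by
    rw [hG_def, smul_smul]
    have he : σ * lam * (σ * lam⁻¹) = σ^2 * (lam * lam⁻¹) := by ring
    rw [he, hσ2, mul_inv_cancel₀ hlam, one_mul, one_smul]
  have hGJ : Gᵀ * Jm * G = Jm := by
    have he : Gᵀ * Jm * G = ((σ * lam⁻¹)*(σ * lam⁻¹)) • (Mᵀ * Jm * M) := by
      rw [hG_def, Matrix.transpose_smul, Matrix.smul_mul, Matrix.mul_smul, Matrix.smul_mul,
        smul_smul]
    rw [he, hMorth, smul_smul]
    have he2 : σ * lam⁻¹ * (σ * lam⁻¹) * lam^2 = σ^2 * (lam⁻¹ * lam)^2 := by ring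
    rw [he2, hσ2, inv_mul_cancel₀ hlam, one_mul, one_pow, one_smul]
  have hGdet : G.det = 1 := by
    rw [hG_def, Matrix.det_smul, hMdet, Fintype.card_fin]
    have : (σ * lam⁻¹)^3 * (σ * lam^3) = (σ^2)^2 * (lam⁻¹ * lam)^3 := by ring
    rw [this, hσ2, inv_mul_cancel₀ hlam]
    norm_num
  have hGns : ¬ ∃ c : ℝ, ∀ X, G.mulVec X = c • X := by
    rintro ⟨c, hc⟩
    apply hnot
    refine ⟨σ * lam * c, fun X => ?_⟩
    rw [← Cm_mulVec m P X, ← hM_def, hMG, Matrix.smul_mulVec, hc X, smul_smul]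
  obtain ⟨a, ha0, hGa'⟩ := exists_eigen G 1 (det_eps G 1 (by norm_num) hGJ hGdet)
  have hGa : G.mulVec a = a := by rw [hGa', one_smul]
  -- the line W
  set φ : (Fin 3 → ℝ) →ₗ[ℝ] ℝ :=
    { toFun := fun X => mink X a
      map_add' := fun X Y => by simp [mink]; ring
      map_smul' := fun c X => by simp [mink]; ring } with hφ_def
  have hφ_apply : ∀ X, φ X = mink X a := fun X => rfl
  refine ⟨LinearMap.ker φ, ?_, ?_, ?_, ?_⟩
  · -- finrank = 2
    have hsurj : Function.Surjective φ := by
      intro r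
      refine ⟨(r / mink (Jv a) a) • Jv a, ?_⟩
      show mink ((r / mink (Jv a) a) • Jv a) a = r
      rw [mink_smul_left]
      have := mink_pos_self a ha0
      field_simp
    have hrange : LinearMap.range φ = ⊤ := LinearMap.range_eq_top.mpr hsurj
    have h1 := LinearMap.finrank_range_add_finrank_ker φ
    rw [hrange] at h1
    rw [finrank_top] at h1
    simp [Module.finrank_self] at h1
    have h3 : Module.finrank ℝ (Fin 3 → ℝ) = 3 := by
      simp [Module.finrank_fin_fun]
    omega
  · -- (i) completion
    intro Q hQW hQ
    have hQa : mink Q a = 0 := hQW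
    set q := mink Q Q with hq_def
    obtain ⟨H, hH_def⟩ : ∃ H' : Matrix (Fin 3) (Fin 3) ℝ, H' = q⁻¹ • (Rm Q * G) := ⟨_, rfl⟩
    have hRH : (Rm Q * G)ᵀ * Jm * (Rm Q * G) = (q^2) • Jm := by
      rw [Matrix.transpose_mul]
      have h1 : Gᵀ * (Rm Q)ᵀ * Jm * (Rm Q * G) = Gᵀ * ((Rm Q)ᵀ * Jm * Rm Q) * G := by
        simp only [Matrix.mul_assoc]
      rw [h1, Rm_orth, Matrix.mul_smul, Matrix.smul_mul, hGJ]
    have hHJ : Hᵀ * Jm * H = Jm := by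
      have he : Hᵀ * Jm * H = (q⁻¹ * q⁻¹) • ((Rm Q * G)ᵀ * Jm * (Rm Q * G)) := by
        rw [hH_def, Matrix.transpose_smul, Matrix.smul_mul, Matrix.mul_smul, Matrix.smul_mul,
          smul_smul]
      rw [he, hRH, smul_smul]
      have : q⁻¹ * q⁻¹ * q^2 = 1 := by field_simp
      rw [this, one_smul]
    have hHdet : H.det = -1 := by
      rw [hH_def, Matrix.det_smul, Matrix.det_mul, Rm_det, hGdet, Fintype.card_fin]
      field_simp
      rw [hq_def]
    have hHa : H.mulVec a = a := by
      rw [hH_def, Matrix.smul_mulVec, ← Matrix.mulVec_mulVec, hGa, Rm_mulVec, rev]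
      rw [mink_symm a Q, hQa]
      have he : mink Q Q • a - (2*(0:ℝ)) • Q = q • a := by rw [hq_def]; module
      rw [he, smul_smul, inv_mul_cancel₀ hQ, one_smul]
    obtain ⟨v, hv, hvA, hHv⟩ := key H hHJ hHdet a ha0 hHa
    refine ⟨v, hvA, hv, ?_⟩
    -- closes
    have hRmQG : Rm Q * G = (q * (mink v v)⁻¹) • Rm v := by
      have h1 : Rm Q * G = q • H := by
        rw [hH_def, smul_smul, mul_inv_cancel₀ hQ, one_smul]
      rw [h1, hHv, smul_smul]
    refine ⟨σ * lam * q * mink v v, ?_, ?_⟩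
    · exact mul_ne_zero (mul_ne_zero (mul_ne_zero hσ0 hlam) hQ) hv
    · intro X
      rw [chain_snoc, ← Cm_mulVec m P X, ← hM_def]
      rw [← Rm_mulVec, ← Rm_mulVec, Matrix.mulVec_mulVec, Matrix.mulVec_mulVec]

      have hmat : Rm v * (Rm Q * M) = (σ * lam * q * mink v v) • 1 := by
        have h2 : Rm Q * M = (σ * lam) • (Rm Q * G) := by
          rw [hMG, Matrix.mul_smul]
        rw [← Matrix.mul_assoc, Matrix.mul_assoc, h2, hRmQG, smul_smul]
        rw [Matrix.mul_smul, Rm_sq, smul_smul]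
        congr 1
        field_simp
      rw [← Matrix.mul_assoc] at hmat
      rw [show Rm v * Rm Q * M = (σ * lam * q * mink v v) • 1 from hmat]
      rw [Matrix.smul_mulVec, Matrix.one_mulVec]
  · -- (ii) membership
    intro Q Q' hQ hQ' hcl
    obtain ⟨c, hc, hcl⟩ := hcl
    have E : Rm Q' * (Rm Q * M) = c • 1 := by
      apply mulVec_ext
      intro X
      rw [← Matrix.mulVec_mulVec, ← Matrix.mulVec_mulVec, hM_def, Cm_mulVec, Rm_mulVec,
        Rm_mulVec, ← chain_snoc, hcl X, Matrix.smul_mulVec, Matrix.one_mulVec]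
    have E2 : (mink Q' Q'^2 * mink Q Q^2) • M = c • (Rm Q * Rm Q') := by
      have h1 : Rm Q' * (Rm Q' * (Rm Q * M)) = Rm Q' * (c • 1) := by rw [E]
      rw [← Matrix.mul_assoc, Rm_sq, Matrix.smul_mul, Matrix.one_mul, Matrix.mul_smul,
        Matrix.mul_one] at h1
      have h2 : Rm Q * (mink Q' Q'^2 • (Rm Q * M)) = Rm Q * (c • Rm Q') := by rw [h1]
      rw [Matrix.mul_smul, Matrix.mul_smul, ← Matrix.mul_assoc, Rm_sq, Matrix.smul_mul,
        Matrix.one_mul, smul_smul] at h2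
      exact h2
    have hsne : mink Q' Q'^2 * mink Q Q^2 ≠ 0 :=
      mul_ne_zero (pow_ne_zero 2 hQ') (pow_ne_zero 2 hQ)
    have hMform : M = ((mink Q' Q'^2 * mink Q Q^2)⁻¹ * c) • (Rm Q * Rm Q') := by
      have := smul_move hsne E2
      rw [this, smul_smul]
    obtain ⟨γ, hγ0, hGform⟩ : ∃ γ : ℝ, γ ≠ 0 ∧ G = γ • (Rm Q * Rm Q') := by
      refine ⟨σ * lam⁻¹ * ((mink Q' Q'^2 * mink Q Q^2)⁻¹ * c), ?_, ?_⟩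
      · exact mul_ne_zero (mul_ne_zero hσ0 (inv_ne_zero hlam))
          (mul_ne_zero (inv_ne_zero hsne) hc)
      · rw [hG_def, hMform, smul_smul]
    by_cases hdep : ∃ t : ℝ, Q' = t • Q
    · exfalso
      obtain ⟨t, ht⟩ := hdep
      apply hGns
      refine ⟨γ * t^2 * mink Q Q^2, fun X => ?_⟩
      rw [hGform, ht, Rm_smul, Matrix.mul_smul, smul_smul, Rm_sq, smul_smul,
        Matrix.smul_mulVec, Matrix.one_mulVec]
    · have hindepQ : ∀ cc d : ℝ, cc • Q + d • Q' = 0 → cc = 0 ∧ d = 0 := by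
        intro cc d h
        by_cases hd : d = 0
        · refine ⟨?_, hd⟩
          rw [hd] at h
          simp at h
          rcases h with h' | h'
          · exact h'
          · exact absurd h' (mink_ne_zero_of hQ)
        · exfalso
          apply hdep
          have h2 : d • Q' = (-cc) • Q := by linear_combination (norm := module) h
          refine ⟨d⁻¹ * (-cc), ?_⟩
          have := smul_move hd h2
          rw [this, smul_smul]
      set u := cp (Jv Q) (Jv Q') with hu_def
      have hu0 : u ≠ 0 := by
        apply indep_cp_ne
        intro cc d h
        exact hindepQ cc d (Jv_eq_zero (by rw [← Jv_add_smul]; exact h))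
      have huQ : mink u Q = 0 := by
        rw [mink_dot, dot3_comm, hu_def, dot3_cp_left]
      have huQ' : mink u Q' = 0 := by
        rw [mink_dot, dot3_comm, hu_def, dot3_cp_right]
      have hGu : G.mulVec u = (γ * mink Q Q * mink Q' Q') • u := by
        rw [hGform, Matrix.smul_mulVec, ← Matrix.mulVec_mulVec, Rm_mulVec Q' u,
          rev_perp huQ', Matrix.mulVec_smul, Rm_mulVec Q u, rev_perp huQ,
          smul_smul, smul_smul]
        congr 1
        ring
      have hmu : γ * mink Q Q * mink Q' Q' = 1 := by
        apply cube_eq_one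
        have hd := hGdet
        rw [hGform, Matrix.det_smul, Matrix.det_mul, Rm_det, Rm_det, Fintype.card_fin] at hd
        nlinarith [hd]
      rw [hmu, one_smul] at hGu
      by_cases hdepa : ∃ t : ℝ, u = t • a
      · obtain ⟨t, ht⟩ := hdepa
        have ht0 : t ≠ 0 := by
          intro h; rw [h, zero_smul] at ht; exact hu0 ht
        constructor
        · show mink Q a = 0
          have h3 := huQ
          rw [ht, mink_smul_left] at h3
          rcases mul_eq_zero.mp h3 with h' | h'
          · exact absurd h' ht0
          · rw [mink_symm]; exact h'
        · show mink Q' a = 0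
          have h3 := huQ'
          rw [ht, mink_smul_left] at h3
          rcases mul_eq_zero.mp h3 with h' | h'
          · exact absurd h' ht0
          · rw [mink_symm]; exact h'
      · exfalso
        have hindepau : ∀ cc d : ℝ, cc • a + d • u = 0 → cc = 0 ∧ d = 0 := by
          intro cc d h
          by_cases hd : d = 0
          · refine ⟨?_, hd⟩
            rw [hd] at h
            simp at h
            rcases h with h' | h'
            · exact h'
            · exact absurd h' ha0
          · exfalso
            apply hdepa
            have h2 : d • u = (-cc) • a := by linear_combination (norm := module) h
            refine ⟨d⁻¹ * (-cc), ?_⟩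
            have := smul_move hd h2
            rw [this, smul_smul]
        have hall := fix G hGJ hGdet a u hGa hGu hindepau
        exact hGns ⟨1, fun X => by rw [hall X, one_smul]⟩
  · -- (iii) uniqueness
    intro Q Q₁ Q₂ hQ hQ1 hQ2 hcl1 hcl2
    obtain ⟨c₁, hc₁, hcl1⟩ := hcl1
    obtain ⟨c₂, hc₂, hcl2⟩ := hcl2
    have E1 : Rm Q₁ * (Rm Q * M) = c₁ • 1 := by
      apply mulVec_ext
      intro X
      rw [← Matrix.mulVec_mulVec, ← Matrix.mulVec_mulVec, hM_def, Cm_mulVec, Rm_mulVec,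
        Rm_mulVec, ← chain_snoc, hcl1 X, Matrix.smul_mulVec, Matrix.one_mulVec]
    have E2 : Rm Q₂ * (Rm Q * M) = c₂ • 1 := by
      apply mulVec_ext
      intro X
      rw [← Matrix.mulVec_mulVec, ← Matrix.mulVec_mulVec, hM_def, Cm_mulVec, Rm_mulVec,
        Rm_mulVec, ← chain_snoc, hcl2 X, Matrix.smul_mulVec, Matrix.one_mulVec]
    have F1 : Rm Q₁ = (c₁⁻¹ * mink Q₁ Q₁^2) • (Rm Q * M) := by
      have h1 : Rm Q₁ * (Rm Q₁ * (Rm Q * M)) = Rm Q₁ * (c₁ • 1) := by rw [E1]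
      rw [← Matrix.mul_assoc, Rm_sq, Matrix.smul_mul, Matrix.one_mul, Matrix.mul_smul,
        Matrix.mul_one] at h1
      have := smul_move hc₁ h1.symm
      rw [this, smul_smul]
    have F2 : Rm Q₂ = (c₂⁻¹ * mink Q₂ Q₂^2) • (Rm Q * M) := by
      have h1 : Rm Q₂ * (Rm Q₂ * (Rm Q * M)) = Rm Q₂ * (c₂ • 1) := by rw [E2]
      rw [← Matrix.mul_assoc, Rm_sq, Matrix.smul_mul, Matrix.one_mul, Matrix.mul_smul,
        Matrix.mul_one] at h1
      have := smul_move hc₂ h1.symm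
      rw [this, smul_smul]
    have hs1 : c₁⁻¹ * mink Q₁ Q₁^2 ≠ 0 := mul_ne_zero (inv_ne_zero hc₁) (pow_ne_zero 2 hQ1)
    have hs2 : c₂⁻¹ * mink Q₂ Q₂^2 ≠ 0 := mul_ne_zero (inv_ne_zero hc₂) (pow_ne_zero 2 hQ2)
    have hRel : Rm Q₂ = ((c₂⁻¹ * mink Q₂ Q₂^2) * (c₁⁻¹ * mink Q₁ Q₁^2)⁻¹) • Rm Q₁ := by
      have hKM : Rm Q * M = (c₁⁻¹ * mink Q₁ Q₁^2)⁻¹ • Rm Q₁ := smul_move hs1 F1.symm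
      rw [F2, hKM, smul_smul]
    set k : ℝ := (c₂⁻¹ * mink Q₂ Q₂^2) * (c₁⁻¹ * mink Q₁ Q₁^2)⁻¹ with hk_def
    have hk0 : k ≠ 0 := mul_ne_zero hs2 (inv_ne_zero hs1)
    have htr : mink Q₂ Q₂ = k * mink Q₁ Q₁ := by
      have h3 := congrArg Matrix.trace hRel
      rw [Rm_trace, Matrix.trace_smul, Rm_trace, smul_eq_mul] at h3
      exact h3
    have happ := congrArg (fun A => A.mulVec Q₂) hRel
    simp only [Matrix.smul_mulVec, Rm_mulVec] at happ
    rw [rev, rev] at happ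
    have hL : mink Q₂ Q₂ • Q₂ - (2 * mink Q₂ Q₂) • Q₂ = (- mink Q₂ Q₂) • Q₂ := by module
    rw [hL] at happ
    have happ3 : (- mink Q₂ Q₂) • Q₂ = mink Q₂ Q₂ • Q₂ - (k * (2 * mink Q₂ Q₁)) • Q₁ := by
      rw [happ, smul_sub, smul_smul, smul_smul, ← htr]
    have h2 : (2 * mink Q₂ Q₂) • Q₂ = (k * (2 * mink Q₂ Q₁)) • Q₁ := by
      linear_combination (norm := module) (-1 : ℝ) • happ3
    have hden : (2 : ℝ) * mink Q₂ Q₂ ≠ 0 := by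
      intro h
      apply hQ2
      linarith
    have hfinal : Q₂ = ((2 * mink Q₂ Q₂)⁻¹ * (k * (2 * mink Q₂ Q₁))) • Q₁ :=
      (smul_move hden h2).trans (smul_smul _ _ _)
    refine ⟨(2 * mink Q₂ Q₂)⁻¹ * (k * (2 * mink Q₂ Q₁)), ?_, hfinal⟩
    intro h0
    rw [h0, zero_smul] at hfinal
    exact mink_ne_zero_of hQ2 hfinal
end
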